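/- arXiv:2002.10300 — 4 statements merged into one kernel-verified Lean document; each statement's English description precedes it below -/
import Mathlib

section
/- Let H be a division ring and n ≥ 2. Let P = H_c[t₁,…,t_n] be the iterated polynomial ring in n central variables over H, and view Q = H_c[t₁,…,t_{n-1}] as the subring of constant polynomials in P. Let F be a division ring that is a classical right quotient ring of P via an injective ring homomorphism φ : P → F. Set E = {φ(f)·φ(g)⁻¹ : f, g ∈ Q, g ≠ 0}. Then E is the underlying set of a division subring of F, and F is a classical right quotient ring of the subring of F generated by E together with φ(t_n) (where t_n denotes the polynomial variable of P over Q). -/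
universe u v w x

/-- The subgroup of ring automorphisms of `M` fixing the image of `ι` pointwise
(the Galois group of the extension `M/F` given by `ι`). -/
def fixingAut {F M : Type*} [DivisionRing F] [DivisionRing M] (ι : F →+* M) :
    Subgroup (RingAut M) where
  carrier := {σ | ∀ x : F, σ (ι x) = ι x}
  one_mem' := fun _ => rfl
  mul_mem' := by
    intro a b ha hb x
    show a (b (ι x)) = ι x
    rw [hb x, ha x]
  inv_mem' := by
    intro a ha x
    show a.symm (ι x) = ι x
    conv_lhs => rw [← ha x]
    exact a.symm_apply_apply _

/-- The extension `M/F` given by `ι : F →+* M` is Galois: every element of `M` fixed by all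
ring automorphisms of `M` fixing `ι(F)` pointwise lies in `ι(F)`. -/
def IsGaloisExt {F M : Type*} [DivisionRing F] [DivisionRing M] (ι : F →+* M) : Prop :=
  ∀ m : M, (∀ σ ∈ fixingAut ι, σ m = m) → m ∈ Set.range ι

/-- The ring `H[X]` of polynomial functions on a division ring `H`: the subring of `H → H`
(with pointwise operations) generated by the constant functions and the identity function. -/
def polyFunRing (H : Type*) [DivisionRing H] : Subring (H → H) :=
  Subring.closure ({f | ∃ c : H, f = Function.const H c} ∪ {id})

/-- `F` is a classical right quotient ring of `R` via the injective ring homomorphism `φ`: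
every element of `F` is of the form `φ a * (φ b)⁻¹` with `b ≠ 0`. -/
def IsClassicalRightQuotient {R F : Type*} [Ring R] [DivisionRing F] (φ : R →+* F) : Prop :=
  Function.Injective φ ∧ ∀ x : F, ∃ a b : R, b ≠ 0 ∧ x = φ a * (φ b)⁻¹

/-- Auxiliary construction for the iterated polynomial ring. -/
noncomputable def IterPolyAux (H : Type u) [Ring H] : ℕ → ((T : Type u) × Ring T)
  | 0 => ⟨H, inferInstance⟩
  | n + 1 =>
    letI := (IterPolyAux H n).2
    ⟨Polynomial (IterPolyAux H n).1, inferInstance⟩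

/-- The iterated polynomial ring `H_c[t₁, …, t_n]` in `n` central variables over `H`:
`IterPoly H 0 = H` and `IterPoly H (n + 1) = Polynomial (IterPoly H n)`. -/
def IterPoly (H : Type u) [Ring H] (n : ℕ) : Type u := (IterPolyAux H n).1

noncomputable instance (H : Type u) [Ring H] (n : ℕ) : Ring (IterPoly H n) :=
  (IterPolyAux H n).2

/-!
Comparing the coefficients of degree `deg q` in `C a * q = C b * p` shows that the right Ore
condition of `Q[X]`, which holds since `Q[X]` has a classical right quotient ring, descends to `Q`.
For a right Ore ring `Q` embedded in a division ring, the right fractions `ψ a * (ψ b)⁻¹` form a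
division subring: left fractions `(ψ b)⁻¹ * ψ a` can be rewritten as right fractions, which gives
closure under products, and `x + y = x * (1 + x⁻¹ * y)` reduces sums to products and the obvious
closure under `1 + ·`. Finally, the subring generated by these fractions and `φ X` contains the
image of `Q[X]`, so it inherits the quotient property.
-/
open Polynomial

/-- The right-handed counterpart of Mathlib's `OreSet R⁰`, which is about left fractions. -/
def IsRightOre (R : Type*) [Ring R] : Prop :=
  ∀ a b : R, b ≠ 0 → ∃ a₁ b₁ : R, b₁ ≠ 0 ∧ a * b₁ = b * a₁

theorem IsRightOre.of_polynomial {R : Type*} [Ring R] (hR : IsRightOre R[X]) : IsRightOre R := by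
  intro a b hb
  obtain ⟨p, q, hq, hpq⟩ := hR (C a) (C b) (C_ne_zero.mpr hb)
  refine ⟨p.coeff q.natDegree, q.coeff q.natDegree, leadingCoeff_ne_zero.mpr hq, ?_⟩
  simpa only [coeff_C_mul] using congrArg (coeff · q.natDegree) hpq

section ClassicalRightQuotient

variable {R F : Type*} [Ring R] [DivisionRing F] {φ : R →+* F}

theorem IsClassicalRightQuotient.isRightOre (hφ : IsClassicalRightQuotient φ) : IsRightOre R := by
  intro a b hb
  obtain ⟨p, q, hq, hpq⟩ := hφ.2 ((φ b)⁻¹ * φ a)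
  refine ⟨p, q, hq, hφ.1 ?_⟩
  have hφb : φ b ≠ 0 := (map_ne_zero_iff φ hφ.1).mpr hb
  have hφq : φ q ≠ 0 := (map_ne_zero_iff φ hφ.1).mpr hq
  rw [inv_mul_eq_iff_eq_mul₀ hφb] at hpq
  rw [map_mul, map_mul, hpq, mul_assoc, mul_assoc, inv_mul_cancel₀ hφq, mul_one]

theorem IsClassicalRightQuotient.subtype_of_range_le (hφ : IsClassicalRightQuotient φ)
    {T : Subring F} (hT : φ.range ≤ T) : IsClassicalRightQuotient T.subtype := by
  refine ⟨Subtype.val_injective, fun x => ?_⟩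
  obtain ⟨a, b, hb, rfl⟩ := hφ.2 x
  refine ⟨⟨φ a, hT ⟨a, rfl⟩⟩, ⟨φ b, hT ⟨b, rfl⟩⟩, ?_, rfl⟩
  simpa [Subtype.ext_iff] using (map_ne_zero_iff φ hφ.1).mpr hb

end ClassicalRightQuotient

theorem Polynomial.range_le_of_map_C_mem_of_map_X_mem {R F : Type*} [Ring R] [Ring F]
    {φ : R[X] →+* F} {T : Subring F} (hC : ∀ a, φ (C a) ∈ T) (hX : φ X ∈ T) : φ.range ≤ T := by
  rintro _ ⟨p, rfl⟩
  induction p using Polynomial.induction_on' with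
  | add p q hp hq => rw [map_add]; exact add_mem hp hq
  | monomial n a =>
    rw [← C_mul_X_pow_eq_monomial, map_mul, map_pow]
    exact mul_mem (hC a) (pow_mem hX n)

section RightFractions

variable {R F : Type*} [Ring R] [DivisionRing F] {ψ : R →+* F}

variable (ψ) in
def rightFractions : Set F := {x | ∃ a b : R, b ≠ 0 ∧ x = ψ a * (ψ b)⁻¹}

variable (ψ) in
theorem map_mem_rightFractions (a : R) : ψ a ∈ rightFractions ψ :=
  haveI := ψ.domain_nontrivial
  ⟨a, 1, one_ne_zero, by simp⟩

theorem inv_mem_rightFractions {x : F} (hx : x ∈ rightFractions ψ) :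
    x⁻¹ ∈ rightFractions ψ := by
  obtain ⟨a, b, hb, rfl⟩ := hx
  by_cases ha : a = 0
  · exact ⟨a, b, hb, by simp [ha]⟩
  · exact ⟨b, a, ha, by rw [mul_inv_rev, inv_inv]⟩

theorem one_add_mem_rightFractions (hψ : Function.Injective ψ) {x : F}
    (hx : x ∈ rightFractions ψ) : 1 + x ∈ rightFractions ψ := by
  obtain ⟨a, b, hb, rfl⟩ := hx
  refine ⟨b + a, b, hb, ?_⟩
  rw [map_add, add_mul, mul_inv_cancel₀ ((map_ne_zero_iff ψ hψ).mpr hb)]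

theorem inv_mul_mem_rightFractions (hψ : Function.Injective ψ) (hR : IsRightOre R) (a : R)
    {b : R} (hb : b ≠ 0) : (ψ b)⁻¹ * ψ a ∈ rightFractions ψ := by
  obtain ⟨a₁, b₁, hb₁, h⟩ := hR a b hb
  refine ⟨a₁, b₁, hb₁, ?_⟩
  rw [inv_mul_eq_iff_eq_mul₀ ((map_ne_zero_iff ψ hψ).mpr hb), ← mul_assoc,
    eq_mul_inv_iff_mul_eq₀ ((map_ne_zero_iff ψ hψ).mpr hb₁), ← map_mul, ← map_mul, h]

theorem mul_mem_rightFractions (hψ : Function.Injective ψ) (hR : IsRightOre R) {x y : F}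
    (hx : x ∈ rightFractions ψ) (hy : y ∈ rightFractions ψ) : x * y ∈ rightFractions ψ := by
  obtain ⟨a, b, hb, rfl⟩ := hx
  obtain ⟨c, d, hd, rfl⟩ := hy
  obtain ⟨c₁, b₁, hb₁, h⟩ := inv_mul_mem_rightFractions hψ hR c hb
  have hdb₁ : d * b₁ ≠ 0 := by
    rw [← map_ne_zero_iff ψ hψ, map_mul]
    exact mul_ne_zero ((map_ne_zero_iff ψ hψ).mpr hd) ((map_ne_zero_iff ψ hψ).mpr hb₁)
  refine ⟨a * c₁, d * b₁, hdb₁, ?_⟩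
  calc ψ a * (ψ b)⁻¹ * (ψ c * (ψ d)⁻¹) = ψ a * ((ψ b)⁻¹ * ψ c) * (ψ d)⁻¹ := by
        simp only [mul_assoc]
    _ = ψ (a * c₁) * (ψ (d * b₁))⁻¹ := by
        rw [h, map_mul, map_mul, mul_inv_rev]
        simp only [mul_assoc]

theorem add_mem_rightFractions (hψ : Function.Injective ψ) (hR : IsRightOre R) {x y : F}
    (hx : x ∈ rightFractions ψ) (hy : y ∈ rightFractions ψ) : x + y ∈ rightFractions ψ := by
  by_cases hx₀ : x = 0
  · rwa [hx₀, zero_add]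
  have h : x + y = x * (1 + x⁻¹ * y) := by rw [mul_add, mul_one, mul_inv_cancel_left₀ hx₀]
  rw [h]
  exact mul_mem_rightFractions hψ hR hx <| one_add_mem_rightFractions hψ <|
    mul_mem_rightFractions hψ hR (inv_mem_rightFractions hx) hy

def rightFractionSubfield (hψ : Function.Injective ψ) (hR : IsRightOre R) : Subfield F where
  carrier := rightFractions ψ
  zero_mem' := map_zero ψ ▸ map_mem_rightFractions ψ 0
  one_mem' := map_one ψ ▸ map_mem_rightFractions ψ 1
  add_mem' := add_mem_rightFractions hψ hR
  mul_mem' := mul_mem_rightFractions hψ hR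
  neg_mem' := by
    rintro _ ⟨a, b, hb, rfl⟩
    exact ⟨-a, b, hb, by rw [map_neg, neg_mul]⟩
  inv_mem' _ := inv_mem_rightFractions

end RightFractions

/-- There are `m + 1` central variables: `Q = IterPoly H m` sits in `P = Q[X]` via `Polynomial.C`,
and `t_n` is `Polynomial.X`. -/
theorem quotients_of_coefficients_form_division_subring_general
    {H : Type u} [DivisionRing H] (m : ℕ)
    {F : Type v} [DivisionRing F]
    (φ : Polynomial (IterPoly H m) →+* F) (hφ : IsClassicalRightQuotient φ) :
    (∃ S : Subring F,
      (S : Set F) = {x | ∃ f g : IterPoly H m,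
          g ≠ 0 ∧ x = φ (Polynomial.C f) * (φ (Polynomial.C g))⁻¹} ∧
      ∀ x ∈ S, x⁻¹ ∈ S) ∧
    (∀ x : F, ∃ a b : Subring.closure
        ({x | ∃ f g : IterPoly H m,
            g ≠ 0 ∧ x = φ (Polynomial.C f) * (φ (Polynomial.C g))⁻¹} ∪
          {φ Polynomial.X}),
      b ≠ 0 ∧ x = (a : F) * (b : F)⁻¹) := by
  have hψ : Function.Injective (φ.comp C) := hφ.1.comp C_injective
  let E := rightFractionSubfield hψ hφ.isRightOre.of_polynomial
  refine ⟨⟨E.toSubring, rfl, fun _ => E.inv_mem⟩, ?_⟩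
  have hrange : φ.range ≤ Subring.closure (rightFractions (φ.comp C) ∪ {φ X}) :=
    range_le_of_map_C_mem_of_map_X_mem
      (fun a => Subring.subset_closure (Or.inl (map_mem_rightFractions (φ.comp C) a)))
      (Subring.subset_closure (Or.inr rfl))
  exact (hφ.subtype_of_range_le hrange).2

/-- Here the total number of central variables is `m + 1 ≥ 2`, the subring
`Q` of constant polynomials being `IterPoly H m` embedded via `Polynomial.C`, and `t_n`
being `Polynomial.X`. -/
theorem quotients_of_coefficients_form_division_subring
    {H : Type u} [DivisionRing H] (m : ℕ) (hm : 1 ≤ m)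
    {F : Type v} [DivisionRing F]
    (φ : Polynomial (IterPoly H m) →+* F) (hφ : IsClassicalRightQuotient φ) :
    (∃ S : Subring F,
      (S : Set F) = {x | ∃ f g : IterPoly H m,
          g ≠ 0 ∧ x = φ (Polynomial.C f) * (φ (Polynomial.C g))⁻¹} ∧
      ∀ x ∈ S, x⁻¹ ∈ S) ∧
    (∀ x : F, ∃ a b : Subring.closure
        ({x | ∃ f g : IterPoly H m,
            g ≠ 0 ∧ x = φ (Polynomial.C f) * (φ (Polynomial.C g))⁻¹} ∪
          {φ Polynomial.X}),
      b ≠ 0 ∧ x = (a : F) * (b : F)⁻¹) :=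
  quotients_of_coefficients_form_division_subring_general m φ hφ
end

section
/- Let H be a division ring with center k, let n be a positive integer, let P = H_c[t₁,…,t_n] be the iterated polynomial ring in n central variables over H, and let F be a division ring that is a classical right quotient ring of P via an injective ring homomorphism φ : P → F. Then the center of F equals the set {φ(f)·φ(g)⁻¹ : f, g elements of the center of P, g ≠ 0}. -/
universe u v w x

/-! If `x` is central in `F`, its denominators `{s | x * φ s ∈ φ(P)}` form a nonzero two-sided
ideal of `P`. Every nonzero two-sided ideal of `P = H_c[t₁,…,t_n]` contains a nonzero central
element, by induction on `n`: in `R[X]` the degree-`d` leading coefficients of an ideal form an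
ideal of `R`, so some element `p` of least degree `d` has a central leading coefficient; then `p`
commutes with every constant `C r`, since `C r * p - p * C r` lies in the ideal and has degree
`< d`. For such a central denominator `g`, the numerator `f` with `φ f = x * φ g` is central too.
-/

def IdealsMeetCenter (R : Type*) [Ring R] : Prop :=
  ∀ I : TwoSidedIdeal R, ∀ x ∈ I, x ≠ 0 → ∃ c ∈ I, c ≠ 0 ∧ c ∈ Subring.center R

theorem DivisionRing.idealsMeetCenter (D : Type*) [DivisionRing D] : IdealsMeetCenter D :=
  fun I _ hxI hx =>
    ⟨1, IsSimpleRing.one_mem_of_ne_zero_mem I hx hxI, one_ne_zero, Subring.one_mem _⟩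

open Polynomial

namespace TwoSidedIdeal

variable {R : Type*} [Ring R]

def leadingCoeffNth (I : TwoSidedIdeal R[X]) (d : ℕ) : TwoSidedIdeal R :=
  .mk' {c | ∃ p ∈ I, p.natDegree ≤ d ∧ p.coeff d = c}
    ⟨0, I.zero_mem, by simp, coeff_zero d⟩
    (by
      rintro _ _ ⟨p, hp, hpd, rfl⟩ ⟨q, hq, hqd, rfl⟩
      exact ⟨p + q, I.add_mem hp hq, (natDegree_add_le p q).trans (max_le hpd hqd),
        coeff_add p q d⟩)
    (by
      rintro _ ⟨p, hp, hpd, rfl⟩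
      exact ⟨-p, I.neg_mem hp, (natDegree_neg p).le.trans hpd, coeff_neg p d⟩)
    (by
      rintro r _ ⟨p, hp, hpd, rfl⟩
      exact ⟨C r * p, I.mul_mem_left _ _ hp, (natDegree_C_mul_le r p).trans hpd,
        coeff_C_mul p⟩)
    (by
      rintro _ r ⟨p, hp, hpd, rfl⟩
      exact ⟨p * C r, I.mul_mem_right _ _ hp, (natDegree_mul_C_le p r).trans hpd,
        coeff_mul_C p d r⟩)

theorem mem_leadingCoeffNth {I : TwoSidedIdeal R[X]} {d : ℕ} {c : R} :
    c ∈ I.leadingCoeffNth d ↔ ∃ p ∈ I, p.natDegree ≤ d ∧ p.coeff d = c :=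
  mem_mk' _ _ _ _ _ _ c

end TwoSidedIdeal

namespace Polynomial

variable {R : Type*} [Ring R]

theorem mem_center_of_forall_commute_C {p : R[X]} (hp : ∀ r : R, Commute (C r) p) :
    p ∈ Subring.center R[X] := by
  refine Subring.mem_center_iff.mpr fun q => ?_
  induction q using Polynomial.induction_on with
  | C a => exact hp a
  | add f g hf hg => rw [add_mul, mul_add, hf, hg]
  | monomial k a _ => exact (hp a).mul_left ((commute_X p).pow_left (k + 1))

theorem mem_center_of_natDegree_minimal {I : TwoSidedIdeal R[X]} {p : R[X]} (hpI : p ∈ I)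
    (hmin : ∀ q ∈ I, q ≠ 0 → p.natDegree ≤ q.natDegree)
    (hlead : p.leadingCoeff ∈ Subring.center R) :
    p ∈ Subring.center R[X] := by
  refine mem_center_of_forall_commute_C fun r => ?_
  set q := C r * p - p * C r
  have hqI : q ∈ I := I.sub_mem (I.mul_mem_left _ _ hpI) (I.mul_mem_right _ _ hpI)
  have hq_degree : q.degree < p.natDegree := by
    refine (degree_lt_iff_coeff_zero q _).mpr fun m hm => ?_
    rcases hm.eq_or_lt with rfl | hm
    · rw [coeff_sub, coeff_C_mul, coeff_mul_C, sub_eq_zero]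
      exact Subring.mem_center_iff.mp hlead r
    · simp only [q, coeff_sub, coeff_C_mul, coeff_mul_C, coeff_eq_zero_of_natDegree_lt hm,
        mul_zero, zero_mul, sub_self]
  by_contra hne
  have hq : q ≠ 0 := sub_ne_zero.mpr hne
  exact (hmin q hqI hq).not_gt ((natDegree_lt_iff_degree_lt hq).mpr hq_degree)

theorem idealsMeetCenter (hR : IdealsMeetCenter R) : IdealsMeetCenter R[X] := by
  classical
  intro I p₀ hp₀I hp₀
  have hdeg : ∃ d, ∃ p ∈ I, p ≠ 0 ∧ p.natDegree = d := ⟨_, p₀, hp₀I, hp₀, rfl⟩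
  obtain ⟨q, hqI, hq, hqd⟩ := Nat.find_spec hdeg
  have hmin : ∀ p ∈ I, p ≠ 0 → Nat.find hdeg ≤ p.natDegree :=
    fun p hpI hp => Nat.find_min' hdeg ⟨p, hpI, hp, rfl⟩
  have hq_lead : q.leadingCoeff ∈ I.leadingCoeffNth (Nat.find hdeg) :=
    TwoSidedIdeal.mem_leadingCoeffNth.mpr ⟨q, hqI, hqd.le, by rw [leadingCoeff, hqd]⟩
  obtain ⟨c, hcI, hc, hc_center⟩ := hR _ _ hq_lead (leadingCoeff_ne_zero.mpr hq)
  obtain ⟨p, hpI, hp_le, rfl⟩ := TwoSidedIdeal.mem_leadingCoeffNth.mp hcI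
  have hp : p ≠ 0 := by rintro rfl; exact hc (coeff_zero _)
  have hpd : p.natDegree = Nat.find hdeg := hp_le.antisymm (hmin p hpI hp)
  refine ⟨p, hpI, hp, mem_center_of_natDegree_minimal hpI (hpd ▸ hmin) ?_⟩
  rwa [leadingCoeff, hpd]

end Polynomial

theorem IterPoly.idealsMeetCenter (H : Type u) [DivisionRing H] (n : ℕ) :
    IdealsMeetCenter (IterPoly H n) := by
  induction n with
  | zero => exact DivisionRing.idealsMeetCenter H
  | succ m ih => exact Polynomial.idealsMeetCenter (R := IterPoly H m) ih

namespace RingHom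

variable {R F : Type*} [Ring R] [Ring F]

def denominators (φ : R →+* F) {x : F} (hx : x ∈ Subring.center F) : TwoSidedIdeal R :=
  .mk' {s | x * φ s ∈ Set.range φ}
    ⟨0, by simp⟩
    (by
      rintro s s' ⟨t, ht⟩ ⟨t', ht'⟩
      exact ⟨t + t', by rw [map_add, map_add, mul_add, ht, ht']⟩)
    (by
      rintro s ⟨t, ht⟩
      exact ⟨-t, by rw [map_neg, map_neg, mul_neg, ht]⟩)
    (by
      rintro r s ⟨t, ht⟩
      refine ⟨r * t, ?_⟩
      rw [map_mul, map_mul, ← mul_assoc, ← Subring.mem_center_iff.mp hx, mul_assoc, ht])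
    (by
      rintro s r ⟨t, ht⟩
      exact ⟨t * r, by rw [map_mul, map_mul, ← mul_assoc, ht]⟩)

theorem mem_denominators (φ : R →+* F) {x : F} (hx : x ∈ Subring.center F) {s : R} :
    s ∈ φ.denominators hx ↔ ∃ t, φ t = x * φ s :=
  TwoSidedIdeal.mem_mk' _ _ _ _ _ _ s

end RingHom

namespace IsClassicalRightQuotient

variable {R F : Type*} [Ring R] [DivisionRing F] {φ : R →+* F}

theorem map_mem_center (hφ : IsClassicalRightQuotient φ) {c : R} (hc : c ∈ Subring.center R) :
    φ c ∈ Subring.center F := by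
  have hcomm (a : R) : Commute (φ c) (φ a) :=
    Commute.map (Subring.mem_center_iff.mp hc a).symm φ
  refine Subring.mem_center_iff.mpr fun y => ?_
  obtain ⟨a, b, -, rfl⟩ := hφ.2 y
  exact ((hcomm a).mul_right (hcomm b).inv_right₀).symm

theorem exists_central_fraction (hφ : IsClassicalRightQuotient φ) (hR : IdealsMeetCenter R)
    {x : F} (hx : x ∈ Subring.center F) :
    ∃ f g : R, f ∈ Subring.center R ∧ g ∈ Subring.center R ∧ g ≠ 0 ∧
      x = φ f * (φ g)⁻¹ := by
  have hφ0 {b : R} (hb : b ≠ 0) : φ b ≠ 0 := (map_ne_zero_iff φ hφ.1).mpr hb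
  obtain ⟨a, b, hb, hab⟩ := hφ.2 x
  have hbI : b ∈ φ.denominators hx :=
    (φ.mem_denominators hx).mpr
      ⟨a, by rw [hab, mul_assoc, inv_mul_cancel₀ (hφ0 hb), mul_one]⟩
  obtain ⟨g, hgI, hg, hg_center⟩ := hR _ b hbI hb
  obtain ⟨f, hf⟩ := (φ.mem_denominators hx).mp hgI
  refine ⟨f, g, Subring.mem_center_iff.mpr fun r => hφ.1 ?_, hg_center, hg, ?_⟩
  · calc φ (r * f) = φ r * (x * φ g) := by rw [map_mul, hf]
      _ = x * φ (g * r) := by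
        rw [← mul_assoc, Subring.mem_center_iff.mp hx (φ r), mul_assoc, ← map_mul,
          Subring.mem_center_iff.mp hg_center r]
      _ = φ (f * r) := by rw [map_mul, ← mul_assoc, ← hf, map_mul]
  · rw [eq_mul_inv_iff_mul_eq₀ (hφ0 hg), hf]

theorem center_eq (hφ : IsClassicalRightQuotient φ) (hR : IdealsMeetCenter R) :
    (Subring.center F : Set F) =
      {x | ∃ f g : R, f ∈ Subring.center R ∧ g ∈ Subring.center R ∧ g ≠ 0 ∧
        x = φ f * (φ g)⁻¹} := by
  ext x
  refine ⟨hφ.exists_central_fraction hR, ?_⟩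
  rintro ⟨f, g, hf, hg, -, rfl⟩
  exact Subring.mul_mem _ (hφ.map_mem_center hf)
    (Set.inv_mem_center (hφ.map_mem_center hg))

end IsClassicalRightQuotient

theorem center_of_fraction_field_of_iterated_central_polynomials_general
    {H : Type u} [DivisionRing H] (n : ℕ)
    {F : Type v} [DivisionRing F]
    (φ : IterPoly H n →+* F) (hφ : IsClassicalRightQuotient φ) :
    (Subring.center F : Set F) =
      {x | ∃ f g : IterPoly H n, f ∈ Subring.center (IterPoly H n) ∧
        g ∈ Subring.center (IterPoly H n) ∧ g ≠ 0 ∧ x = φ f * (φ g)⁻¹} :=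
  hφ.center_eq (IterPoly.idealsMeetCenter H n)

theorem center_of_fraction_field_of_iterated_central_polynomials
    {H : Type u} [DivisionRing H] (n : ℕ) (hn : 1 ≤ n)
    {F : Type v} [DivisionRing F]
    (φ : IterPoly H n →+* F) (hφ : IsClassicalRightQuotient φ) :
    (Subring.center F : Set F) =
      {x | ∃ f g : IterPoly H n, f ∈ Subring.center (IterPoly H n) ∧
        g ∈ Subring.center (IterPoly H n) ∧ g ≠ 0 ∧ x = φ f * (φ g)⁻¹} :=
  center_of_fraction_field_of_iterated_central_polynomials_general n φ hφ
end

section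
/- Let H be a division ring of finite dimension n over its center k, and assume k is infinite. Then the ring H[X] of polynomial functions on H is isomorphic, as a ring, to the iterated polynomial ring H_c[t₁,…,t_n] in n central variables over H. -/
universe u v w x

/-!
Let `k` be the center of `H` and `b` a `k`-basis of `H`. Substituting for the central variable
`tᵢ` the `i`-th coordinate function `x ↦ bᵢ*(x)`, which takes central values, gives a ring map
`H_c[t₁,…,t_n] → (H → H)`. It is injective since `k` is infinite, so an iterated polynomial
vanishing on `kⁿ` is zero. Its image contains the constants and `id = ∑ tᵢ bᵢ`, and it lies in
`H[X]` because every `k`-linear endomorphism of `H`, in particular every coordinate function, is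
of the form `x ↦ ∑ aᵢ x bᵢ`: by the Artin–Whaples lemma `(aᵢ) ↦ (x ↦ ∑ aᵢ x bᵢ)` is an injective
`k`-linear map `Hⁿ → End_k H`, and both sides have dimension `n²`.
-/

theorem Polynomial.eq_zero_of_forall_eval_algebraMap_eq_zero {k A : Type*} [Field k] [Infinite k]
    [Ring A] [Algebra k A] {q : Polynomial A} (h : ∀ c : k, q.eval (algebraMap k A c) = 0) :
    q = 0 := by
  ext d
  rw [Polynomial.coeff_zero, ← Module.forall_dual_apply_eq_zero_iff k]
  intro φ
  let L : Polynomial A →ₗ[k] Polynomial k := Polynomial.lsum fun d => Polynomial.monomial d ∘ₗ φ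
  have h_coeff (p : Polynomial A) : (L p).coeff d = φ (p.coeff d) := by
    induction p using Polynomial.induction_on' with
    | add p q hp hq => rw [map_add, Polynomial.coeff_add, hp, hq, Polynomial.coeff_add, map_add]
    | monomial e a => simp [L, Polynomial.coeff_monomial, apply_ite φ]
  have h_eval (p : Polynomial A) (c : k) : (L p).eval c = φ (p.eval (algebraMap k A c)) := by
    induction p using Polynomial.induction_on' with
    | add p q hp hq => rw [map_add, Polynomial.eval_add, hp, hq, Polynomial.eval_add, map_add]
    | monomial e a => simp [L, ← map_pow, ← Algebra.commutes, ← Algebra.smul_def, mul_comm]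
  have hL : L q = 0 := Polynomial.funext fun c => by
    rw [h_eval, h, map_zero, Polynomial.eval_zero]
  rw [← h_coeff, hL, Polynomial.coeff_zero]

section DivisionRing

variable {H : Type*} [DivisionRing H]

theorem eq_zero_of_forall_sum_mul_mul_eq_zero {r : ℕ} {a b : Fin r → H}
    (hb : LinearIndependent (Subring.center H) b) (h : ∀ x, ∑ i, a i * x * b i = 0) : a = 0 := by
  induction r with
  | zero => funext i; exact i.elim0
  | succ r ih =>
    have hb' := hb.comp _ (Fin.castSucc_injective r)
    have hlast : a (Fin.last r) = 0 := by
      by_contra hne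
      set a' : Fin (r + 1) → H := fun i => (a (Fin.last r))⁻¹ * a i
      have ha' (x : H) : ∑ i, a' i * x * b i = 0 := by
        simp only [a', mul_assoc, ← Finset.mul_sum]
        simp only [← mul_assoc, h, mul_zero]
      have ha'_last : a' (Fin.last r) = 1 := inv_mul_cancel₀ hne
      -- The commutators `a' i * y - y * a' i` satisfy the same identity and vanish at the last
      -- index, so by induction every `a' i` is central; then `x = 1` is a central relation.
      have hcentral : ∀ i, a' i ∈ Subring.center H := by
        refine Fin.lastCases (by simp [ha'_last]) fun j => Subring.mem_center_iff.2 fun y => ?_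
        have hcomm := ih (a := fun i => a' i.castSucc * y - y * a' i.castSucc) hb' fun x => by
          have key : ∑ i, (a' i * y - y * a' i) * x * b i = 0 :=
            calc ∑ i, (a' i * y - y * a' i) * x * b i
                = ∑ i, a' i * (y * x) * b i - y * ∑ i, a' i * x * b i := by
                  rw [Finset.mul_sum, ← Finset.sum_sub_distrib]
                  exact Finset.sum_congr rfl fun i _ => by noncomm_ring
              _ = 0 := by rw [ha', ha', mul_zero, sub_zero]
          simpa [Fin.sum_univ_castSucc, ha'_last] using key
        exact (sub_eq_zero.1 (congrFun hcomm j)).symm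
      have h_one_eq_zero := Fintype.linearIndependent_iff.1 hb (fun i => ⟨a' i, hcentral i⟩)
        (by simpa [Subring.smul_def] using ha' 1) (Fin.last r)
      simp [ha'_last] at h_one_eq_zero
    have htail := ih (a := a ∘ Fin.castSucc) hb' fun x => by
      simpa [Fin.sum_univ_castSucc, hlast] using h x
    funext i
    exact Fin.lastCases hlast (congrFun htail) i

noncomputable def sumMulLeftRight {r : ℕ} (b : Fin r → H) :
    (Fin r → H) →ₗ[Subring.center H] Module.End (Subring.center H) H :=
  ∑ i, LinearMap.llcomp _ H H H (LinearMap.mulRight _ (b i)) ∘ₗ LinearMap.mul _ H ∘ₗ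
    LinearMap.proj i

@[simp]
theorem sumMulLeftRight_apply {r : ℕ} (b : Fin r → H) (a : Fin r → H) (x : H) :
    sumMulLeftRight b a x = ∑ i, a i * x * b i := by
  simp [sumMulLeftRight]

theorem sumMulLeftRight_surjective [FiniteDimensional (Subring.center H) H] {r : ℕ}
    (b : Module.Basis (Fin r) (Subring.center H) H) : Function.Surjective (sumMulLeftRight b) := by
  refine (LinearMap.injective_iff_surjective_of_finrank_eq_finrank ?_).1 ?_
  · simp [Module.finrank_linearMap, Module.finrank_pi_fintype, Module.finrank_eq_card_basis b]
  · rw [← LinearMap.ker_eq_bot, LinearMap.ker_eq_bot']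
    exact fun a ha => eq_zero_of_forall_sum_mul_mul_eq_zero b.linearIndependent fun x => by
      simpa using LinearMap.congr_fun ha x

theorem const_mem_polyFunRing (c : H) : Function.const H c ∈ polyFunRing H :=
  Subring.subset_closure (Or.inl ⟨c, rfl⟩)

theorem id_mem_polyFunRing : (id : H → H) ∈ polyFunRing H :=
  Subring.subset_closure (Or.inr rfl)

theorem linearMap_mem_polyFunRing [FiniteDimensional (Subring.center H) H]
    (f : H →ₗ[Subring.center H] H) : ⇑f ∈ polyFunRing H := by
  let b := Module.finBasis (Subring.center H) H
  obtain ⟨a, rfl⟩ := sumMulLeftRight_surjective b f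
  have : ⇑(sumMulLeftRight b a) = ∑ i, Function.const H (a i) * id * Function.const H (b i) := by
    ext x; simp
  rw [this]
  exact sum_mem fun i _ => mul_mem (mul_mem (const_mem_polyFunRing _) id_mem_polyFunRing)
    (const_mem_polyFunRing _)

theorem basis_coord_mem_center {n : ℕ} (b : Module.Basis (Fin n) (Subring.center H) H)
    (i : Fin n) : (fun x => (b.repr x i : H)) ∈ Subring.center (H → H) :=
  Subring.mem_center_iff.2 fun g => funext fun x => Subring.mem_center_iff.1 (b.repr x i).2 (g x)

end DivisionRing

namespace IterPoly

section Eval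

variable {R : Type u} [Ring R]

noncomputable def toPolynomial (m : ℕ) : IterPoly R (m + 1) ≃+* Polynomial (IterPoly R m) :=
  RingEquiv.refl _

noncomputable def C : ∀ m : ℕ, R →+* IterPoly R m
  | 0 => RingHom.id R
  | m + 1 => (toPolynomial m).symm.toRingHom.comp (Polynomial.C.comp (C m))

noncomputable def X : ∀ m : ℕ, Fin m → IterPoly R m
  | 0 => Fin.elim0
  | m + 1 => Fin.lastCases ((toPolynomial m).symm Polynomial.X)
      fun i => (toPolynomial m).symm (Polynomial.C (X m i))

variable {S T : Type*} [Ring S] [Ring T]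

noncomputable def eval₂ (f : R →+* S) :
    ∀ {m : ℕ} (v : Fin m → S), (∀ i, v i ∈ Subring.center S) → IterPoly R m →+* S
  | 0, _, _ => f
  | m + 1, v, hv =>
    (Polynomial.eval₂RingHom' (eval₂ f (fun i => v i.castSucc) fun i => hv i.castSucc)
      (v (Fin.last m)) fun _ => Subring.mem_center_iff.1 (hv _) _).comp (toPolynomial m).toRingHom

theorem eval₂_succ (f : R →+* S) {m : ℕ} (v : Fin (m + 1) → S)
    (hv : ∀ i, v i ∈ Subring.center S) (p : IterPoly R (m + 1)) :
    eval₂ f v hv p = (toPolynomial m p).eval₂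
      (eval₂ f (fun i => v i.castSucc) fun i => hv i.castSucc) (v (Fin.last m)) :=
  rfl

variable (f : R →+* S) {m : ℕ} (v : Fin m → S) (hv : ∀ i, v i ∈ Subring.center S)

@[simp]
theorem eval₂_C (c : R) : eval₂ f v hv (C m c) = f c := by
  induction m with
  | zero => rfl
  | succ m ih => exact (Polynomial.eval₂_C _ _).trans (ih _ _)

@[simp]
theorem eval₂_X (i : Fin m) : eval₂ f v hv (X m i) = v i := by
  induction m with
  | zero => exact i.elim0
  | succ m ih =>
    induction i using Fin.lastCases with
    | last => simp [eval₂_succ, X]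
    | cast i => simp [eval₂_succ, X, ih]

theorem hom_eval₂ (ψ : S →+* T) (hψv : ∀ i, ψ (v i) ∈ Subring.center T) (p : IterPoly R m) :
    ψ (eval₂ f v hv p) = eval₂ (ψ.comp f) (fun i => ψ (v i)) hψv p := by
  induction m with
  | zero => rfl
  | succ m ih =>
    rw [eval₂_succ, Polynomial.hom_eval₂, eval₂_succ]
    congr 1
    exact RingHom.ext (ih _ _ _)

theorem eval₂_mem {U : Subring S} (hf : ∀ c, f c ∈ U) (hvU : ∀ i, v i ∈ U) (p : IterPoly R m) :
    eval₂ f v hv p ∈ U := by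
  induction m with
  | zero => exact hf p
  | succ m ih =>
    rw [eval₂_succ, Polynomial.eval₂_eq_sum_range]
    exact sum_mem fun d _ => mul_mem (ih _ _ (fun i => hvU _) _) (pow_mem (hvU _) _)

end Eval

section Algebra

variable {k A : Type*} [Field k] [Ring A] [Algebra k A] {m : ℕ}

noncomputable def eval (v : Fin m → k) : IterPoly A m →+* A :=
  eval₂ (RingHom.id A) (fun i => algebraMap k A (v i))
    fun i => Subring.mem_center_iff.2 fun a => (Algebra.commutes (v i) a).symm

theorem eval_snoc (v : Fin m → k) (c : k) (p : IterPoly A (m + 1)) :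
    eval (Fin.snoc v c) p = ((toPolynomial m p).map (eval v)).eval (algebraMap k A c) := by
  rw [← Polynomial.eval₂_eq_eval_map, eval, eval₂_succ]
  simp [eval]

theorem eq_zero_of_forall_eval_eq_zero [Infinite k] {p : IterPoly A m}
    (h : ∀ v : Fin m → k, eval v p = 0) : p = 0 := by
  induction m with
  | zero => exact h Fin.elim0
  | succ m ih =>
    refine (toPolynomial m).map_eq_zero_iff.1 (Polynomial.ext fun d => ih fun v => ?_)
    have hmap : (toPolynomial m p).map (eval v) = 0 :=
      Polynomial.eq_zero_of_forall_eval_algebraMap_eq_zero fun c => by rw [← eval_snoc, h]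
    simpa using congr(Polynomial.coeff $hmap d)

end Algebra

variable {H : Type u} [DivisionRing H] {n : ℕ} (b : Module.Basis (Fin n) (Subring.center H) H)

noncomputable def evalCoords : IterPoly H n →+* (H → H) :=
  eval₂ (Pi.constRingHom H H) (fun i x => (b.repr x i : H)) (basis_coord_mem_center b)

theorem evalCoords_apply (p : IterPoly H n) (x : H) : evalCoords b p x = eval (b.repr x) p := by
  rw [evalCoords]
  exact hom_eval₂ _ _ _ (Pi.evalRingHom (fun _ : H => H) x : (H → H) →+* H) _ p

theorem evalCoords_injective [Infinite (Subring.center H)] : Function.Injective (evalCoords b) := by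
  refine (injective_iff_map_eq_zero _).2 fun p hp =>
    eq_zero_of_forall_eval_eq_zero (k := Subring.center H) fun v => ?_
  have hx := congrFun hp (b.equivFun.symm v)
  rwa [evalCoords_apply, ← b.equivFun_apply, LinearEquiv.apply_symm_apply] at hx

theorem range_evalCoords [FiniteDimensional (Subring.center H) H] :
    (evalCoords b).range = polyFunRing H := by
  refine le_antisymm ?_ ?_
  · rintro _ ⟨p, rfl⟩
    exact eval₂_mem _ _ _ const_mem_polyFunRing
      (fun i => linearMap_mem_polyFunRing (Algebra.linearMap _ H ∘ₗ b.coord i)) p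
  · rw [polyFunRing, Subring.closure_le]
    rintro f (⟨c, rfl⟩ | rfl)
    · exact ⟨C n c, eval₂_C ..⟩
    · refine ⟨∑ i, X n i * C n (b i), funext fun x => ?_⟩
      simpa [evalCoords, Finset.sum_apply, Subring.smul_def] using b.sum_repr x

end IterPoly

theorem polyFunRing_iso_iterated_central_polynomials
    {H : Type u} [DivisionRing H] [FiniteDimensional (Subring.center H) H] (n : ℕ)
    (hn : Module.finrank (Subring.center H) H = n)
    (hk : Infinite (Subring.center H)) :
    Nonempty (polyFunRing H ≃+* IterPoly H n) := by
  let b := Module.finBasisOfFinrankEq _ _ hn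
  let e := RingEquiv.ofBijective (IterPoly.evalCoords b).rangeRestrict
    ⟨fun p q h => IterPoly.evalCoords_injective b (congrArg Subtype.val h),
      (IterPoly.evalCoords b).rangeRestrict_surjective⟩
  exact ⟨(RingEquiv.subringCongr (IterPoly.range_evalCoords b).symm).trans e.symm⟩
end

section
/- Let ℍ denote the real quaternions and let R = MvPolynomial (Fin 4) ℝ. Define Φ : Quaternion R → (ℍ → ℍ) by sending p (a quaternion with components p₁, p₂, p₃, p₄ ∈ R) to the function a ↦ p₁(v(a)) + p₂(v(a))·i + p₃(v(a))·j + p₄(v(a))·k, where v(a) = (a.re, a.imI, a.imJ, a.imK) ∈ ℝ⁴ and pₗ(v(a)) denotes evaluation of the multivariate polynomial pₗ at v(a). Then Φ is an injective ring homomorphism (into the ring of functions ℍ → ℍ with pointwise operations) whose range is exactly the subring of ℍ → ℍ generated by the constant functions and the identity function. In particular, the ring ℍ[X] of polynomial functions on ℍ is isomorphic to Quaternion (MvPolynomial (Fin 4) ℝ). -/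
universe u v w x

/-- The imaginary unit `i` of the real quaternions. -/
noncomputable def qi : Quaternion ℝ := ⟨0, 1, 0, 0⟩

/-- The imaginary unit `j` of the real quaternions. -/
noncomputable def qj : Quaternion ℝ := ⟨0, 0, 1, 0⟩

/-- The imaginary unit `k` of the real quaternions. -/
noncomputable def qk : Quaternion ℝ := ⟨0, 0, 0, 1⟩

/-- The map sending a quaternion `p` with components in `MvPolynomial (Fin 4) ℝ` to the
polynomial function `a ↦ p₁(v a) + p₂(v a)·i + p₃(v a)·j + p₄(v a)·k` on the real
quaternions, where `v a = (a.re, a.imI, a.imJ, a.imK)`. -/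
noncomputable def Phi (p : Quaternion (MvPolynomial (Fin 4) ℝ)) :
    Quaternion ℝ → Quaternion ℝ := fun a =>
  ((MvPolynomial.eval ![a.re, a.imI, a.imJ, a.imK] p.re : ℝ) : Quaternion ℝ)
  + ((MvPolynomial.eval ![a.re, a.imI, a.imJ, a.imK] p.imI : ℝ) : Quaternion ℝ) * qi
  + ((MvPolynomial.eval ![a.re, a.imI, a.imJ, a.imK] p.imJ : ℝ) : Quaternion ℝ) * qj
  + ((MvPolynomial.eval ![a.re, a.imI, a.imJ, a.imK] p.imK : ℝ) : Quaternion ℝ) * qk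

/-! The identity `4 re a = a - i a i - j a j - k a k` writes `a ↦ re a` as a polynomial
function, and composing it with `a ↦ -i a, -j a, -k a` gives the other coordinate functions.
Hence every function `a ↦ p₁(v a) + p₂(v a) i + p₃(v a) j + p₄(v a) k` is polynomial, while the
constants and the identity are visibly of this form. Injectivity holds because a real polynomial
vanishing on all of `ℝ⁴` is zero. -/

theorem polyFunRing.const_mem {H : Type*} [DivisionRing H] (c : H) :
    Function.const H c ∈ polyFunRing H :=
  Subring.subset_closure (Or.inl ⟨c, rfl⟩)

theorem polyFunRing.id_mem {H : Type*} [DivisionRing H] : (id : H → H) ∈ polyFunRing H :=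
  Subring.subset_closure (Or.inr rfl)

namespace Quaternion

open MvPolynomial

section CommRing

variable {R S : Type*} [CommRing R] [CommRing S]

def map (f : R →+* S) : ℍ[R] →+* ℍ[S] where
  toFun a := ⟨f a.re, f a.imI, f a.imJ, f a.imK⟩
  map_one' := by ext <;> simp
  map_mul' a b := by
    change (⟨_, _, _, _⟩ : ℍ[S]) = ⟨_, _, _, _⟩ * ⟨_, _, _, _⟩
    ext <;> simp [re_mul, imI_mul, imJ_mul, imK_mul] <;> ring
  map_zero' := by ext <;> simp
  map_add' a b := by
    change (⟨_, _, _, _⟩ : ℍ[S]) = ⟨_, _, _, _⟩ + ⟨_, _, _, _⟩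
    ext <;> simp

@[simp] theorem re_map (f : R →+* S) (a : ℍ[R]) : (map f a).re = f a.re := rfl
@[simp] theorem imI_map (f : R →+* S) (a : ℍ[R]) : (map f a).imI = f a.imI := rfl
@[simp] theorem imJ_map (f : R →+* S) (a : ℍ[R]) : (map f a).imJ = f a.imJ := rfl
@[simp] theorem imK_map (f : R →+* S) (a : ℍ[R]) : (map f a).imK = f a.imK := rfl

def coords (a : ℍ[R]) : Fin 4 → R := ![a.re, a.imI, a.imJ, a.imK]

noncomputable def evalPolyFun : ℍ[MvPolynomial (Fin 4) R] →+* (ℍ[R] → ℍ[R]) :=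
  RingHom.pi fun a => map (eval (coords a))

theorem evalPolyFun_apply (p : ℍ[MvPolynomial (Fin 4) R]) (a : ℍ[R]) :
    evalPolyFun p a = map (eval (coords a)) p :=
  rfl

theorem evalPolyFun_map_C (c : ℍ[R]) : evalPolyFun (map C c) = Function.const ℍ[R] c := by
  funext a
  ext <;> simp [evalPolyFun_apply]

theorem evalPolyFun_mk_X :
    evalPolyFun (⟨X 0, X 1, X 2, X 3⟩ : ℍ[MvPolynomial (Fin 4) R]) = id := by
  funext a
  ext <;> exact eval_X _

theorem evalPolyFun_injective [IsDomain R] [Infinite R] :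
    Function.Injective (evalPolyFun (R := R)) := by
  intro p q h
  have h_eval : ∀ v : Fin 4 → R, map (eval v) p = map (eval v) q := by
    intro v
    have hv : coords (⟨v 0, v 1, v 2, v 3⟩ : ℍ[R]) = v := by
      funext n; fin_cases n <;> rfl
    rw [← hv]
    exact congrFun h _
  have h_comps := fun v => Quaternion.ext_iff.1 (h_eval v)
  apply Quaternion.ext <;> apply MvPolynomial.funext <;> intro v
  exacts [(h_comps v).1, (h_comps v).2.1, (h_comps v).2.2.1, (h_comps v).2.2.2]

end CommRing

theorem mk_eq_coe_add_coe_mul (r x y z : ℝ) :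
    (⟨r, x, y, z⟩ : ℍ) = (r : ℍ) + (x : ℍ) * qi + (y : ℍ) * qj + (z : ℍ) * qk := by
  ext <;> simp [re_mul, imI_mul, imJ_mul, imK_mul] <;> simp [qi, qj, qk]

theorem evalPolyFun_eq_Phi : ⇑(evalPolyFun (R := ℝ)) = Phi :=
  funext₂ fun _ _ => mk_eq_coe_add_coe_mul _ _ _ _

theorem coe_four_mul_re (a : ℍ) :
    ((4 * a.re : ℝ) : ℍ) = a - qi * a * qi - qj * a * qj - qk * a * qk := by
  ext <;> simp [re_mul, imI_mul, imJ_mul, imK_mul] <;> simp [qi, qj, qk]; ring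

theorem coe_re_comp_mem_polyFunRing {f : ℍ → ℍ} (hf : f ∈ polyFunRing ℍ) :
    (fun a => ((f a).re : ℍ)) ∈ polyFunRing ℍ := by
  have h_conj : ∀ u : ℍ, Function.const _ u * f * Function.const _ u ∈ polyFunRing ℍ :=
    fun u => mul_mem (mul_mem (polyFunRing.const_mem u) hf) (polyFunRing.const_mem u)
  have h_re : (fun a => ((f a).re : ℍ)) = Function.const _ ((4⁻¹ : ℝ) : ℍ) *
      (f - Function.const _ qi * f * Function.const _ qi
        - Function.const _ qj * f * Function.const _ qj
        - Function.const _ qk * f * Function.const _ qk) := by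
    funext a
    simp only [Pi.mul_apply, Pi.sub_apply, Function.const_apply]
    rw [← coe_four_mul_re, ← coe_mul, inv_mul_cancel_left₀ four_ne_zero]
  rw [h_re]
  exact mul_mem (polyFunRing.const_mem _)
    (sub_mem (sub_mem (sub_mem hf (h_conj _)) (h_conj _)) (h_conj _))

theorem coe_coords_mem_polyFunRing (n : Fin 4) :
    (fun a => ((coords a n : ℝ) : ℍ)) ∈ polyFunRing ℍ := by
  obtain ⟨u, hu⟩ : ∃ u : ℍ, ∀ a, (u * a).re = coords a n := by
    fin_cases n
    exacts [⟨1, by simp [coords]⟩, ⟨-qi, by simp [coords, re_mul]; simp [qi]⟩,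
      ⟨-qj, by simp [coords, re_mul]; simp [qj]⟩, ⟨-qk, by simp [coords, re_mul]; simp [qk]⟩]
  simpa [hu] using coe_re_comp_mem_polyFunRing
    (mul_mem (polyFunRing.const_mem u) polyFunRing.id_mem)

theorem coe_eval_coords_mem_polyFunRing (q : MvPolynomial (Fin 4) ℝ) :
    (fun a => ((eval (coords a) q : ℝ) : ℍ)) ∈ polyFunRing ℍ := by
  induction q using MvPolynomial.induction_on with
  | C c =>
    simp only [eval_C]
    exact polyFunRing.const_mem (c : ℍ)
  | add p q hp hq =>
    simp only [map_add, coe_add]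
    exact add_mem hp hq
  | mul_X p n hp =>
    simp only [map_mul, eval_X, coe_mul]
    exact mul_mem hp (coe_coords_mem_polyFunRing n)

theorem range_evalPolyFun : (evalPolyFun (R := ℝ)).range = polyFunRing ℍ := by
  apply le_antisymm
  · rintro _ ⟨p, rfl⟩
    have h_comp := coe_eval_coords_mem_polyFunRing
    have h_const := polyFunRing.const_mem (H := ℍ)
    rw [evalPolyFun_eq_Phi, show Phi p = (fun a => ((eval (coords a) p.re : ℝ) : ℍ))
        + (fun a => ((eval (coords a) p.imI : ℝ) : ℍ)) * Function.const _ qi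
        + (fun a => ((eval (coords a) p.imJ : ℝ) : ℍ)) * Function.const _ qj
        + (fun a => ((eval (coords a) p.imK : ℝ) : ℍ)) * Function.const _ qk from rfl]
    exact add_mem (add_mem (add_mem (h_comp _) (mul_mem (h_comp _) (h_const _)))
      (mul_mem (h_comp _) (h_const _))) (mul_mem (h_comp _) (h_const _))
  · rw [polyFunRing, Subring.closure_le]
    rintro f (⟨c, rfl⟩ | rfl)
    exacts [⟨_, evalPolyFun_map_C c⟩, ⟨_, evalPolyFun_mk_X⟩]

end Quaternion

theorem quaternion_polyFunRing_iso_quaternion_mvPolynomial :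
    (∃ Ψ : Quaternion (MvPolynomial (Fin 4) ℝ) →+* (Quaternion ℝ → Quaternion ℝ),
      ⇑Ψ = Phi ∧ Function.Injective Ψ ∧ Ψ.range = polyFunRing (Quaternion ℝ)) ∧
    Nonempty (polyFunRing (Quaternion ℝ) ≃+* Quaternion (MvPolynomial (Fin 4) ℝ)) := by
  refine ⟨⟨Quaternion.evalPolyFun, Quaternion.evalPolyFun_eq_Phi,
    Quaternion.evalPolyFun_injective, Quaternion.range_evalPolyFun⟩, ?_⟩
  let e := RingEquiv.ofBijective (Quaternion.evalPolyFun (R := ℝ)).rangeRestrict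
    ⟨fun _ _ h => Quaternion.evalPolyFun_injective (congrArg Subtype.val h),
      RingHom.rangeRestrict_surjective _⟩
  exact ⟨(RingEquiv.subringCongr Quaternion.range_evalPolyFun.symm).trans e.symm⟩
end
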